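/- Let q be an odd prime with q ≡ 1 (mod 5) or q ≡ −1 (mod 5). Then L_{q−1} ≡ 2 (mod q²), where L_n is the n-th Lucas number. -/

import Mathlib

/-- The Lucas numbers: `L_0 = 2`, `L_1 = 1`, `L_i = L_{i-1} + L_{i-2}`. -/
def lucasNum : ℕ → ℤ
  | 0 => 2
  | 1 => 1
  | n + 2 => lucasNum (n + 1) + lucasNum n

/-!
Since `q ≡ ±1 (mod 5)`, quadratic reciprocity makes `5` a square mod `q`, so `x² = x + 1` has two
distinct roots `α, β` in `𝔽_q`. From `x^(n+1) = F_{n+1} x + F_n` and Fermat's `α^(q-1) = β^(q-1) = 1`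
one gets `F_{q-1} ≡ 0` and `L_{q-1} ≡ 2 (mod q)`. The identity `L_n² - 5 F_n² = 4` for even `n`
then reads `(L_{q-1} - 2)(L_{q-1} + 2) = 5 F_{q-1}² ≡ 0 (mod q²)`, and `q ∤ L_{q-1} + 2 ≡ 4`.
-/

open Nat (fib fib_add_two)

lemma lucasNum_add_two (n : ℕ) : lucasNum (n + 2) = lucasNum (n + 1) + lucasNum n := rfl

lemma lucasNum_succ (n : ℕ) : lucasNum (n + 1) = fib (n + 1) + 2 * fib n := by
  induction n using Nat.twoStepInduction with
  | zero => rfl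
  | one => rfl
  | more n ih₀ ih₁ =>
    rw [lucasNum_add_two, ih₀, ih₁]
    simp only [fib_add_two]
    push_cast
    ring

lemma fib_succ_sq_sub_fib_mul_fib_succ_sub_fib_sq (n : ℕ) :
    (fib (n + 1) : ℤ) ^ 2 - fib n * fib (n + 1) - fib n ^ 2 = (-1) ^ n := by
  induction n with
  | zero => simp
  | succ n ih =>
    rw [fib_add_two]
    push_cast
    linear_combination -ih

lemma lucasNum_sq_sub_five_mul_fib_sq (n : ℕ) :
    lucasNum n ^ 2 - 5 * (fib n : ℤ) ^ 2 = 4 * (-1) ^ n := by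
  cases n with
  | zero => rfl
  | succ n =>
    rw [lucasNum_succ]
    linear_combination -4 * fib_succ_sq_sub_fib_mul_fib_succ_sub_fib_sq n

lemma pow_succ_eq_fib_mul_add_fib {R : Type*} [CommRing R] {x : R} (hx : x ^ 2 = x + 1)
    (n : ℕ) : x ^ (n + 1) = fib (n + 1) * x + fib n := by
  induction n with
  | zero => simp
  | succ n ih =>
    rw [pow_succ, ih, fib_add_two]
    push_cast
    linear_combination (fib (n + 1) : R) * hx

lemma fib_succ_eq_zero_and_lucasNum_succ_eq_two_of_pow_succ_eq_one {R : Type*} [CommRing R]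
    [IsDomain R] {α β : R} (hα : α ^ 2 = α + 1) (hβ : β ^ 2 = β + 1) (hαβ : α ≠ β) {n : ℕ}
    (hαn : α ^ (n + 1) = 1) (hβn : β ^ (n + 1) = 1) :
    (fib (n + 1) : R) = 0 ∧ (lucasNum (n + 1) : R) = 2 := by
  rw [pow_succ_eq_fib_mul_add_fib hα] at hαn
  rw [pow_succ_eq_fib_mul_add_fib hβ] at hβn
  have hfib : (fib (n + 1) : R) * (α - β) = 0 := by linear_combination hαn - hβn
  have hfib' : (fib (n + 1) : R) = 0 :=
    (mul_eq_zero.mp hfib).resolve_right (sub_ne_zero.mpr hαβ)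
  refine ⟨hfib', ?_⟩
  rw [lucasNum_succ]
  push_cast
  linear_combination 2 * hαn + (1 - 2 * α) * hfib'

lemma exists_ne_roots_sq_eq_add_one {K : Type*} [Field K] (h2 : (2 : K) ≠ 0) (h5 : (5 : K) ≠ 0)
    (h5sq : IsSquare (5 : K)) : ∃ α β : K, α ^ 2 = α + 1 ∧ β ^ 2 = β + 1 ∧ α ≠ β := by
  obtain ⟨r, hr⟩ := h5sq
  refine ⟨(1 + r) / 2, (1 - r) / 2, ?_, ?_, fun h ↦ h5 ?_⟩
  · field_simp
    linear_combination -hr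
  · field_simp
    linear_combination -hr
  · field_simp at h
    have hr0 : r = 0 := by simpa [h2] using (show 2 * r = 0 by linear_combination h)
    rw [hr, hr0, mul_zero]

lemma ZMod.isSquare_five {p : ℕ} [Fact p.Prime] (hp2 : p ≠ 2)
    (hp : (p : ZMod 5) = 1 ∨ (p : ZMod 5) = -1) : IsSquare (5 : ZMod p) := by
  have : Fact (Nat.Prime 5) := ⟨by norm_num⟩
  have hsq := (ZMod.exists_sq_eq_prime_iff_of_mod_four_eq_one (p := 5) (by norm_num) hp2).mp
  push_cast at hsq
  apply hsq
  rcases hp with hp | hp <;> rw [hp]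
  · exact ⟨1, rfl⟩
  · exact ⟨2, rfl⟩

lemma ZMod.fib_sub_one_eq_zero_and_lucasNum_sub_one_eq_two {p : ℕ} [Fact p.Prime] (hp2 : p ≠ 2)
    (hp5 : p ≠ 5) (h5 : IsSquare (5 : ZMod p)) :
    (fib (p - 1) : ZMod p) = 0 ∧ (lucasNum (p - 1) : ZMod p) = 2 := by
  have hcast {m : ℕ} (hm : m.Prime) (hmp : p ≠ m) : (m : ZMod p) ≠ 0 := by
    rw [ne_eq, ZMod.natCast_eq_zero_iff, Nat.prime_dvd_prime_iff_eq Fact.out hm]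
    exact hmp
  obtain ⟨α, β, hα, hβ, hαβ⟩ := exists_ne_roots_sq_eq_add_one
    (by exact_mod_cast hcast Nat.prime_two hp2) (by exact_mod_cast hcast (by norm_num) hp5) h5
  have hroot_ne_zero {x : ZMod p} (hx : x ^ 2 = x + 1) : x ≠ 0 := by
    rintro rfl
    simp at hx
  have hp : p - 1 = p - 2 + 1 := by have := (Fact.out : p.Prime).two_le; omega
  have hαp := ZMod.pow_card_sub_one_eq_one (hroot_ne_zero hα)
  have hβp := ZMod.pow_card_sub_one_eq_one (hroot_ne_zero hβ)
  rw [hp] at hαp hβp ⊢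
  exact fib_succ_eq_zero_and_lucasNum_succ_eq_two_of_pow_succ_eq_one hα hβ hαβ hαp hβp

lemma pow_dvd_sub_of_pow_dvd_sq_sub_sq {R : Type*} [CommRing R] [IsDomain R] {p a c : R}
    (hp : Prime p) (hp2 : ¬ p ∣ 2) (hc : ¬ p ∣ c) (ha : p ∣ a - c) {k : ℕ}
    (h : p ^ k ∣ a ^ 2 - c ^ 2) : p ^ k ∣ a - c := by
  have hac : ¬ p ∣ a + c := fun hac ↦ (hp.not_dvd_mul hp2 hc)
    (by simpa [two_mul] using dvd_sub hac ha)
  rw [sq_sub_sq] at h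
  exact hp.pow_dvd_of_dvd_mul_left k hac h

theorem lucasNum_qsub1_congr_general (q : ℕ) (hq : q.Prime)
    (h5 : (q : ℤ) ≡ 1 [ZMOD 5] ∨ (q : ℤ) ≡ -1 [ZMOD 5]) :
    lucasNum (q - 1) ≡ 2 [ZMOD (q : ℤ) ^ 2] := by
  have := Fact.mk hq
  have h5' : (q : ZMod 5) = 1 ∨ (q : ZMod 5) = -1 := by
    rcases h5 with h | h
    · left; exact_mod_cast (ZMod.intCast_eq_intCast_iff _ _ 5).mpr h
    · right; exact_mod_cast (ZMod.intCast_eq_intCast_iff _ _ 5).mpr h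
  have hq2 : q ≠ 2 := by rintro rfl; revert h5'; decide
  have hq5 : q ≠ 5 := by rintro rfl; revert h5'; decide
  obtain ⟨hF, hL⟩ := ZMod.fib_sub_one_eq_zero_and_lucasNum_sub_one_eq_two hq2 hq5
    (ZMod.isSquare_five hq2 h5')
  have hqL : (q : ℤ) ∣ lucasNum (q - 1) - 2 := by
    rw [← ZMod.intCast_zmod_eq_zero_iff_dvd]
    push_cast
    rw [hL, sub_self]
  have hqF : (q : ℤ) ∣ fib (q - 1) := by
    exact_mod_cast (ZMod.natCast_eq_zero_iff _ _).mp hF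
  have hsq : (q : ℤ) ^ 2 ∣ lucasNum (q - 1) ^ 2 - 2 ^ 2 := by
    have hid := lucasNum_sq_sub_five_mul_fib_sq (q - 1)
    rw [(Nat.Odd.sub_odd (hq.odd_of_ne_two hq2) odd_one).neg_one_pow] at hid
    rw [show lucasNum (q - 1) ^ 2 - 2 ^ 2 = 5 * fib (q - 1) ^ 2 by linear_combination hid]
    exact dvd_mul_of_dvd_right (pow_dvd_pow_of_dvd hqF 2) 5
  have hq2' : ¬ (q : ℤ) ∣ 2 := by
    exact_mod_cast mt (Nat.prime_dvd_prime_iff_eq hq Nat.prime_two).mp hq2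
  exact (Int.modEq_iff_dvd.mpr (pow_dvd_sub_of_pow_dvd_sq_sub_sq
    (Nat.prime_iff_prime_int.mp hq) hq2' hq2' hqL hsq)).symm

/-- **(19).** If `q` is an odd prime with `q ≡ ±1 (mod 5)`, then
`L_{q-1} ≡ 2 (mod q²)`. -/
theorem lucasNum_qsub1_congr (q : ℕ) (hq : q.Prime) (hodd : Odd q)
    (h5 : (q : ℤ) ≡ 1 [ZMOD 5] ∨ (q : ℤ) ≡ -1 [ZMOD 5]) :
    lucasNum (q - 1) ≡ 2 [ZMOD (q : ℤ) ^ 2] :=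
  lucasNum_qsub1_congr_general q hq h5
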